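/- Let (T_0, T_1) be an extended 1-perfect trade of length n, and let G be the simple graph with vertex set T_0 ∪ T_1 in which two words are adjacent if and only if their Hamming distance is 2 (the subgraph of the halved n-cube induced by T_0 ∪ T_1). Then (T_0, T_1) is primary if and only if G is connected. -/

import Mathlib

/-- An extended 1-perfect trade of length `n`. -/
def IsExtTrade {n : ℕ} (T₀ T₁ : Finset (Fin n → ZMod 2)) : Prop :=
  T₀.Nonempty ∧ T₁.Nonempty ∧ Disjoint T₀ T₁ ∧
  (∀ x ∈ T₀ ∪ T₁, Even (hammingNorm x)) ∧
  ∀ x : Fin n → ZMod 2, Odd (hammingNorm x) →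
    (T₀.filter fun y => hammingDist x y = 1).card =
      (T₁.filter fun y => hammingDist x y = 1).card ∧
    (T₀.filter fun y => hammingDist x y = 1).card ≤ 1

/-- A trade is primary if it cannot be split into two trades. -/
def IsPrimary {n : ℕ} (T₀ T₁ : Finset (Fin n → ZMod 2)) : Prop :=
  ¬ ∃ A₀ A₁ B₀ B₁ : Finset (Fin n → ZMod 2),
      IsExtTrade A₀ A₁ ∧ IsExtTrade B₀ B₁ ∧
      Disjoint A₀ B₀ ∧ Disjoint A₁ B₁ ∧ T₀ = A₀ ∪ B₀ ∧ T₁ = A₁ ∪ B₁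

/-- The subgraph of the halved n-cube induced by T₀ ∪ T₁: two words are adjacent
iff their Hamming distance is 2. -/
def tradeGraph {n : ℕ} (T₀ T₁ : Finset (Fin n → ZMod 2)) :
    SimpleGraph ↥(T₀ ∪ T₁) :=
  SimpleGraph.fromRel fun x y => hammingDist (x : Fin n → ZMod 2) (y : Fin n → ZMod 2) = 2

/-!
Around an odd word `x`, a trade has either no neighbours at all or exactly one in `T₀` and one
in `T₁`, and these two are at distance 2. So any predicate that is constant along distance-2 pairs
between `T₀` and `T₁` — such as membership in a connected component of the graph — cuts out a
subtrade together with its complement. Conversely, comparing the unique neighbours of `x` in a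
subtrade and in the whole trade shows that the words of a subtrade are closed under distance-2
steps inside the trade, hence form a union of connected components.
-/

open Finset

section Hamming
variable {ι : Type*} [Fintype ι]

lemma natCast_hammingNorm_eq_sum (x : ι → ZMod 2) : (hammingNorm x : ZMod 2) = ∑ i, x i := by
  rw [hammingNorm, card_filter]
  push_cast
  refine sum_congr rfl fun i _ => ?_
  generalize x i = a
  revert a; decide

lemma natCast_hammingDist (x y : ι → ZMod 2) :
    (hammingDist x y : ZMod 2) = hammingNorm x + hammingNorm y := by
  rw [hammingDist_eq_hammingNorm, natCast_hammingNorm_eq_sum, natCast_hammingNorm_eq_sum,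
    natCast_hammingNorm_eq_sum, ← sum_add_distrib]
  refine sum_congr rfl fun i _ => ?_
  simp only [Pi.add_apply, Pi.neg_apply, ZMod.neg_eq_self_mod_two]

lemma odd_hammingNorm_of_hammingDist_eq_one {x u : ι → ZMod 2} (hu : Even (hammingNorm u))
    (h : hammingDist x u = 1) : Odd (hammingNorm x) := by
  have := natCast_hammingDist x u
  rwa [h, hu.natCast_zmod_two, add_zero, Nat.cast_one, eq_comm,
    ZMod.natCast_eq_one_iff_odd] at this

lemma hammingDist_eq_two_of_le_two {u w : ι → ZMod 2} (hu : Even (hammingNorm u))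
    (hw : Even (hammingNorm w)) (hne : u ≠ w) (hle : hammingDist u w ≤ 2) :
    hammingDist u w = 2 := by
  have heven : Even (hammingDist u w) := by
    rw [← ZMod.natCast_eq_zero_iff_even, natCast_hammingDist, hu.natCast_zmod_two,
      hw.natCast_zmod_two, add_zero]
  obtain ⟨k, hk⟩ := heven
  have := hammingDist_pos.mpr hne
  omega

section Update
variable {β : ι → Type*} [∀ i, DecidableEq (β i)] [DecidableEq ι]

lemma hammingDist_update_left_self {u : ∀ i, β i} {i : ι} {b : β i} (hb : b ≠ u i) :
    hammingDist (Function.update u i b) u = 1 := by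
  rw [hammingDist, card_eq_one]
  refine ⟨i, ?_⟩
  ext j
  rcases eq_or_ne j i with rfl | hj <;> simp [*]

lemma hammingDist_update_left_add_one {u v : ∀ i, β i} {i : ι} (hi : u i ≠ v i) :
    hammingDist (Function.update u i (v i)) v + 1 = hammingDist u v := by
  have : ({j | Function.update u i (v i) j ≠ v j} : Finset ι) =
      ({j | u j ≠ v j} : Finset ι).erase i := by
    ext j
    rcases eq_or_ne j i with rfl | hj <;> simp [*]
  rw [hammingDist, this, card_erase_add_one (by simpa using hi), hammingDist]

lemma exists_hammingDist_eq_one_of_eq_two {u v : ∀ i, β i} (h : hammingDist u v = 2) :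
    ∃ x, hammingDist x u = 1 ∧ hammingDist x v = 1 := by
  obtain ⟨i, hi⟩ : ∃ i, u i ≠ v i := by
    by_contra! huv
    simp [funext huv] at h
  refine ⟨Function.update u i (v i), hammingDist_update_left_self hi.symm, ?_⟩
  have := hammingDist_update_left_add_one hi
  omega

end Update

end Hamming

namespace IsExtTrade
variable {n : ℕ} {T₀ T₁ : Finset (Fin n → ZMod 2)}

lemma symm (hT : IsExtTrade T₀ T₁) : IsExtTrade T₁ T₀ := by
  obtain ⟨h₀, h₁, hdisj, heven, hcount⟩ := hT
  refine ⟨h₁, h₀, hdisj.symm, fun x hx => heven x (union_comm T₀ T₁ ▸ hx), fun x hx => ?_⟩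
  obtain ⟨heq, hle⟩ := hcount x hx
  exact ⟨heq.symm, heq ▸ hle⟩

lemma even_of_mem_left (hT : IsExtTrade T₀ T₁) {u : Fin n → ZMod 2} (hu : u ∈ T₀) :
    Even (hammingNorm u) :=
  hT.2.2.2.1 u (mem_union_left _ hu)

lemma ne_of_mem (hT : IsExtTrade T₀ T₁) {u w : Fin n → ZMod 2} (hu : u ∈ T₀) (hw : w ∈ T₁) :
    u ≠ w := by
  rintro rfl
  exact disjoint_left.mp hT.2.2.1 hu hw

lemma nonempty_fin (hT : IsExtTrade T₀ T₁) : Nonempty (Fin n) := by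
  obtain ⟨u, hu⟩ := hT.1
  obtain ⟨w, hw⟩ := hT.2.1
  obtain ⟨i, -⟩ := Function.ne_iff.mp (hT.ne_of_mem hu hw)
  exact ⟨i⟩

lemma neighbours_eq_empty_or_singleton (hT : IsExtTrade T₀ T₁) {x : Fin n → ZMod 2}
    (hx : Odd (hammingNorm x)) :
    (T₀.filter (hammingDist x · = 1) = ∅ ∧ T₁.filter (hammingDist x · = 1) = ∅) ∨
      ∃ u w, T₀.filter (hammingDist x · = 1) = {u} ∧ T₁.filter (hammingDist x · = 1) = {w} := by
  obtain ⟨heq, hle⟩ := hT.2.2.2.2 x hx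
  rcases Nat.le_one_iff_eq_zero_or_eq_one.mp hle with h | h
  · exact .inl ⟨card_eq_zero.mp h, card_eq_zero.mp (heq ▸ h)⟩
  · obtain ⟨u, hu⟩ := card_eq_one.mp h
    obtain ⟨w, hw⟩ := card_eq_one.mp (heq ▸ h)
    exact .inr ⟨u, w, hu, hw⟩

lemma neighbours_eq_singleton (hT : IsExtTrade T₀ T₁) {x u : Fin n → ZMod 2} (hu : u ∈ T₀)
    (hxu : hammingDist x u = 1) :
    T₀.filter (hammingDist x · = 1) = {u} ∧ ∃ w, T₁.filter (hammingDist x · = 1) = {w} := by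
  have hx := odd_hammingNorm_of_hammingDist_eq_one (hT.even_of_mem_left hu) hxu
  have hmem : u ∈ T₀.filter (hammingDist x · = 1) := mem_filter.mpr ⟨hu, hxu⟩
  rcases hT.neighbours_eq_empty_or_singleton hx with ⟨h₀, -⟩ | ⟨u', w, h₀, h₁⟩
  · simp [h₀] at hmem
  · rw [h₀, mem_singleton] at hmem
    exact ⟨hmem ▸ h₀, w, h₁⟩

lemma hammingDist_eq_two_of_neighbours (hT : IsExtTrade T₀ T₁) {x u w : Fin n → ZMod 2}
    (hu : u ∈ T₀) (hw : w ∈ T₁) (hxu : hammingDist x u = 1) (hxw : hammingDist x w = 1) :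
    hammingDist u w = 2 := by
  refine hammingDist_eq_two_of_le_two (hT.even_of_mem_left hu) (hT.symm.even_of_mem_left hw)
    (hT.ne_of_mem hu hw) ?_
  calc hammingDist u w ≤ hammingDist u x + hammingDist x w := hammingDist_triangle u x w
    _ = 2 := by rw [hammingDist_comm u x, hxu, hxw]

lemma exists_mem_right_hammingDist_eq_two (hT : IsExtTrade T₀ T₁) {u : Fin n → ZMod 2}
    (hu : u ∈ T₀) : ∃ w ∈ T₁, hammingDist u w = 2 := by
  obtain ⟨i⟩ := hT.nonempty_fin
  have hxu : hammingDist (Function.update u i (u i + 1)) u = 1 :=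
    hammingDist_update_left_self (add_ne_left.mpr one_ne_zero)
  obtain ⟨-, w, hw⟩ := hT.neighbours_eq_singleton hu hxu
  obtain ⟨hwT, hxw⟩ := mem_filter.mp (hw ▸ mem_singleton_self w)
  exact ⟨w, hwT, hT.hammingDist_eq_two_of_neighbours hu hwT hxu hxw⟩

lemma filter (hT : IsExtTrade T₀ T₁) (p : (Fin n → ZMod 2) → Prop) [DecidablePred p]
    (hp : ∀ u ∈ T₀, ∀ w ∈ T₁, hammingDist u w = 2 → (p u ↔ p w))
    (hc : ∃ c ∈ T₀ ∪ T₁, p c) : IsExtTrade (T₀.filter p) (T₁.filter p) := by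
  obtain ⟨c, hc, hpc⟩ := hc
  have hne : (T₀.filter p).Nonempty ∧ (T₁.filter p).Nonempty := by
    rcases mem_union.mp hc with hc | hc
    · obtain ⟨w, hw, hcw⟩ := hT.exists_mem_right_hammingDist_eq_two hc
      exact ⟨⟨c, mem_filter.mpr ⟨hc, hpc⟩⟩, ⟨w, mem_filter.mpr ⟨hw, (hp c hc w hw hcw).mp hpc⟩⟩⟩
    · obtain ⟨u, hu, hcu⟩ := hT.symm.exists_mem_right_hammingDist_eq_two hc
      refine ⟨⟨u, mem_filter.mpr ⟨hu, ?_⟩⟩, ⟨c, mem_filter.mpr ⟨hc, hpc⟩⟩⟩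
      exact (hp u hu c hc (hammingDist_comm c u ▸ hcu)).mpr hpc
  refine ⟨hne.1, hne.2, disjoint_filter_filter hT.2.2.1, fun x hx => ?_, fun x hx => ?_⟩
  · exact hT.2.2.2.1 x (union_subset_union (filter_subset p T₀) (filter_subset p T₁) hx)
  rw [filter_comm, filter_comm p]
  rcases hT.neighbours_eq_empty_or_singleton hx with ⟨h₀, h₁⟩ | ⟨u, w, h₀, h₁⟩
  · simp [h₀, h₁]
  obtain ⟨hu, hxu⟩ := mem_filter.mp (h₀ ▸ mem_singleton_self u)
  obtain ⟨hw, hxw⟩ := mem_filter.mp (h₁ ▸ mem_singleton_self w)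
  have hpuw := hp u hu w hw (hT.hammingDist_eq_two_of_neighbours hu hw hxu hxw)
  by_cases hpu : p u <;> simp [h₀, h₁, filter_singleton, hpu, ← hpuw]

lemma mem_right_of_hammingDist_eq_two {A₀ A₁ : Finset (Fin n → ZMod 2)} (hT : IsExtTrade T₀ T₁)
    (hA : IsExtTrade A₀ A₁) (hA₀ : A₀ ⊆ T₀) (hA₁ : A₁ ⊆ T₁) {u v : Fin n → ZMod 2}
    (hu : u ∈ A₀) (hv : v ∈ T₀ ∪ T₁) (huv : hammingDist u v = 2) : v ∈ A₁ := by
  obtain ⟨x, hxu, hxv⟩ := exists_hammingDist_eq_one_of_eq_two huv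
  obtain ⟨hT₀, w, hT₁⟩ := hT.neighbours_eq_singleton (hA₀ hu) hxu
  obtain ⟨-, w', hA₁'⟩ := hA.neighbours_eq_singleton hu hxu
  obtain ⟨hw', hxw'⟩ := mem_filter.mp (hA₁' ▸ mem_singleton_self w')
  have hunique : ∀ y ∈ T₁, hammingDist x y = 1 → y = w := fun y hy hxy =>
    mem_singleton.mp (hT₁ ▸ mem_filter.mpr ⟨hy, hxy⟩)
  rcases mem_union.mp hv with hv | hv
  · have : v = u := mem_singleton.mp (hT₀ ▸ mem_filter.mpr ⟨hv, hxv⟩)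
    simp [this] at huv
  · rwa [hunique v hv hxv, ← hunique w' (hA₁ hw') hxw']

end IsExtTrade

lemma SimpleGraph.Reachable.of_adj_imp {V : Type*} {G : SimpleGraph V} {p : V → Prop}
    (hp : ∀ u v, G.Adj u v → p u → p v) {u v : V} (huv : G.Reachable u v) (hu : p u) : p v := by
  obtain ⟨w⟩ := huv
  induction w with
  | nil => exact hu
  | cons h _ ih => exact ih (hp _ _ h hu)

section TradeGraph
variable {n : ℕ} {T₀ T₁ : Finset (Fin n → ZMod 2)}

@[simp]
lemma tradeGraph_adj {u v : ↥(T₀ ∪ T₁)} :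
    (tradeGraph T₀ T₁).Adj u v ↔ hammingDist (u : Fin n → ZMod 2) v = 2 := by
  rw [tradeGraph, SimpleGraph.fromRel_adj, hammingDist_comm (v : Fin n → ZMod 2), or_self,
    and_iff_right_iff_imp]
  rintro h rfl
  simp at h

namespace IsExtTrade

lemma not_isPrimary_of_separating (hT : IsExtTrade T₀ T₁) (p : (Fin n → ZMod 2) → Prop)
    [DecidablePred p] (hp : ∀ u ∈ T₀, ∀ w ∈ T₁, hammingDist u w = 2 → (p u ↔ p w))
    {a b : Fin n → ZMod 2} (ha : a ∈ T₀ ∪ T₁) (hb : b ∈ T₀ ∪ T₁) (hpa : p a) (hpb : ¬ p b) :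
    ¬ IsPrimary T₀ T₁ := fun hprim =>
  hprim ⟨_, _, _, _, hT.filter p hp ⟨a, ha, hpa⟩,
    hT.filter (¬ p ·) (fun u hu w hw huw => (hp u hu w hw huw).not) ⟨b, hb, hpb⟩,
    disjoint_filter_filter_not _ _ _, disjoint_filter_filter_not _ _ _,
    (filter_union_filter_not_eq _ _).symm, (filter_union_filter_not_eq _ _).symm⟩

lemma connected_of_isPrimary (hT : IsExtTrade T₀ T₁) (hprim : IsPrimary T₀ T₁) :
    (tradeGraph T₀ T₁).Connected := by
  classical
  obtain ⟨c, hc⟩ := hT.1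
  have : Nonempty ↥(T₀ ∪ T₁) := ⟨⟨c, mem_union_left _ hc⟩⟩
  refine ⟨fun a b => ?_⟩
  by_contra hab
  let p v := ∃ h : v ∈ T₀ ∪ T₁, (tradeGraph T₀ T₁).Reachable a ⟨v, h⟩
  refine hT.not_isPrimary_of_separating p (fun u hu w hw huw => ?_) a.2 b.2 ⟨a.2, .rfl⟩
    (fun ⟨_, h⟩ => hab h) hprim
  have hadj : (tradeGraph T₀ T₁).Adj ⟨u, mem_union_left _ hu⟩ ⟨w, mem_union_right _ hw⟩ :=
    tradeGraph_adj.mpr huw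
  exact ⟨fun ⟨_, h⟩ => ⟨_, h.trans hadj.reachable⟩,
    fun ⟨_, h⟩ => ⟨_, h.trans hadj.symm.reachable⟩⟩

lemma isPrimary_of_connected (hT : IsExtTrade T₀ T₁) (hG : (tradeGraph T₀ T₁).Connected) :
    IsPrimary T₀ T₁ := by
  rintro ⟨A₀, A₁, B₀, B₁, hA, hB, h₀, -, rfl, rfl⟩
  have hclosed : ∀ u v : ↥(A₀ ∪ B₀ ∪ (A₁ ∪ B₁)), (tradeGraph _ _).Adj u v →
      (u : Fin n → ZMod 2) ∈ A₀ ∪ A₁ → (v : Fin n → ZMod 2) ∈ A₀ ∪ A₁ := by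
    intro u v huv hu
    rw [tradeGraph_adj] at huv
    rcases mem_union.mp hu with hu | hu
    · exact mem_union_right _ (hT.mem_right_of_hammingDist_eq_two hA subset_union_left
        subset_union_left hu v.2 huv)
    · exact mem_union_left _ (hT.symm.mem_right_of_hammingDist_eq_two hA.symm subset_union_left
        subset_union_left hu (union_comm (A₀ ∪ B₀) _ ▸ v.2) huv)
  obtain ⟨a, ha⟩ := hA.1
  obtain ⟨b, hb⟩ := hB.1
  have hab := (hG.preconnected ⟨a, mem_union_left _ (mem_union_left _ ha)⟩
    ⟨b, mem_union_left _ (mem_union_right _ hb)⟩).of_adj_imp hclosed (mem_union_left _ ha)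
  rcases mem_union.mp hab with hb' | hb'
  · exact disjoint_left.mp h₀ hb' hb
  · exact hT.ne_of_mem (mem_union_right _ hb) (mem_union_left _ hb') rfl

end IsExtTrade

end TradeGraph

/-- an extended 1-perfect trade is primary iff the subgraph of the
halved n-cube induced by T₀ ∪ T₁ is connected. -/
theorem stmt_9 (n : ℕ) (T₀ T₁ : Finset (Fin n → ZMod 2)) (hT : IsExtTrade T₀ T₁) :
    IsPrimary T₀ T₁ ↔ (tradeGraph T₀ T₁).Connected :=
  ⟨hT.connected_of_isPrimary, hT.isPrimary_of_connected⟩
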